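/- arXiv:2112.09122 — 4 statements merged into one kernel-verified Lean document; each statement's English description precedes it below -/
import Mathlib

section
/- Let N ≥ 1, let τ be the N-cycle on {0,1,…,N−1} sending i to i+1 mod N, and let g be any permutation of {0,1,…,N−1}. Then #(g) + #(τ g⁻¹) = N + 1 if and only if g is non-crossing. Equivalently, d(e,g) + d(g,τ) = d(e,τ) = N − 1 holds exactly when g is non-crossing. -/
/-!
Induction on `N`, erasing one point `k` from the cycle of `g` containing it. If `k` is fixed by
`g`, or if `g` sends the point `k - 1` preceding `k` (cyclically) to `k`, then erasing `k` lowers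
`#(g) + #(τ g⁻¹)` by exactly one: one of `g`, `τ g⁻¹` loses the fixed point `k`, the other only
shortens a longer cycle, and erasing `k` from `τ` gives the shorter rotation. Such an erasure
neither creates nor destroys non-crossingness. If no such `k` exists, `g` and `τ g⁻¹` are both
fixed-point free, so each has at most `N / 2` cycles; but a non-crossing `g` always has such a `k`,
a fixed point or the end of a shortest arc `x < g x`.

Non-crossingness is used in its rotation-invariant form, for the circular order of `Fin N`: no two
cycles cross, and no point of the cycle of `x` lies strictly between `x` and `g x`.
-/

noncomputable def cycleCount {α : Type*} (g : Equiv.Perm α) : ℕ :=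
  Nat.card (Quotient (Setoid.mk g.SameCycle
    ⟨fun x => Equiv.Perm.SameCycle.refl g x,
     fun h => h.symm,
     fun h₁ h₂ => h₁.trans h₂⟩))

/-- The Cayley distance `d(g,h) = N - #(g h⁻¹)` on the permutations of a finite set. -/
noncomputable def cayley {α : Type*} (g h : Equiv.Perm α) : ℕ :=
  Nat.card α - cycleCount (g * h⁻¹)

/-- A permutation of `{0 < 1 < ... < N-1}` is non-crossing if (i) its orbit partition is
non-crossing and (ii) it maps each element to the cyclic successor within its orbit. -/
def IsNonCrossing {N : ℕ} (g : Equiv.Perm (Fin N)) : Prop :=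
  (∀ a b c d : Fin N, a < b → b < c → c < d →
      g.SameCycle a c → g.SameCycle b d → g.SameCycle a b) ∧
  (∀ x : Fin N,
    ((∃ y, g.SameCycle x y ∧ x < y) →
      IsLeast {y | g.SameCycle x y ∧ x < y} (g x)) ∧
    ((¬ ∃ y, g.SameCycle x y ∧ x < y) →
      IsLeast {y | g.SameCycle x y} (g x)))

open Equiv Equiv.Perm

section CycleCount

variable {α : Type*}

theorem cycleCount_eq_card_quotient (g : Perm α) :
    cycleCount g = Nat.card (Quotient (SameCycle.setoid g)) := rfl

theorem cycleCount_inv (g : Perm α) : cycleCount g⁻¹ = cycleCount g := by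
  simp only [cycleCount_eq_card_quotient]
  exact Nat.card_congr (Quotient.congr (Equiv.refl α) fun _ _ => sameCycle_inv)

theorem one_le_cycleCount [Finite α] [Nonempty α] (g : Perm α) : 1 ≤ cycleCount g := by
  have : Nonempty (Quotient (SameCycle.setoid g)) := .map (Quotient.mk _) ‹_›
  exact Nat.card_pos

theorem cycleCount_le_card [Finite α] (g : Perm α) : cycleCount g ≤ Nat.card α :=
  Nat.card_le_card_of_surjective _ Quotient.mk_surjective

theorem two_mul_cycleCount_le [Finite α] {g : Perm α} (hg : ∀ x, g x ≠ x) :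
    2 * cycleCount g ≤ Nat.card α := by
  let s := SameCycle.setoid g
  have hmk : ∀ x, (⟦g x⟧ : Quotient s) = ⟦x⟧ := fun x =>
    Quotient.sound (sameCycle_apply_left.2 (SameCycle.refl g x))
  have hinj : Function.Injective
      (Sum.elim (fun q : Quotient s => q.out) fun q : Quotient s => g q.out) := by
    rintro (q | q) (q' | q') h <;> simp only [Sum.elim_inl, Sum.elim_inr] at h
    · rw [Quotient.out_injective h]
    · obtain rfl : q = q' := by rw [← q.out_eq, ← q'.out_eq, h, hmk]
      exact absurd h.symm (hg _)
    · obtain rfl : q = q' := by rw [← q.out_eq, ← q'.out_eq, ← h, hmk]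
      exact absurd h (hg _)
    · rw [Quotient.out_injective (g.injective h)]
  simpa [Nat.card_sum, two_mul, cycleCount_eq_card_quotient] using
    Nat.card_le_card_of_injective _ hinj

theorem cayley_comm (g h : Perm α) : cayley g h = cayley h g := by
  rw [cayley, cayley, ← cycleCount_inv, mul_inv_rev, inv_inv]

end CycleCount

section Fin

variable {n : ℕ}

theorem Fin.val_succAbove_eq_ite (p : Fin (n + 1)) (i : Fin n) :
    (p.succAbove i : ℕ) = if (i : ℕ) < p then (i : ℕ) else (i : ℕ) + 1 := by
  split_ifs with h
  · rw [Fin.succAbove_of_castSucc_lt _ _ (Fin.lt_def.2 h), Fin.val_castSucc]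
  · rw [Fin.succAbove_of_le_castSucc _ _ (Fin.le_def.2 (not_lt.1 h)), Fin.val_succ]

theorem Fin.sbtw_succAbove_iff {p : Fin (n + 1)} {a b c : Fin n} :
    sbtw (p.succAbove a) (p.succAbove b) (p.succAbove c) ↔ sbtw a b c := by
  simp only [Fin.sbtw_iff, Fin.succAbove_lt_succAbove_iff]

theorem Fin.sbtw_rotate {a b c d : Fin n} (h₁ : sbtw a b c) (h₂ : sbtw c d a) : sbtw b c d := by
  simp only [Fin.sbtw_iff, Fin.lt_def] at *
  omega

theorem Fin.not_sbtw_of_finRotate_eq {p k : Fin (n + 1)} (h : finRotate _ p = k)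
    (y : Fin (n + 1)) : ¬sbtw p y k := by
  subst h
  have := y.is_lt
  simp only [Fin.sbtw_iff, Fin.lt_def, coe_finRotate, Fin.ext_iff, Fin.val_last]
  split_ifs <;> omega

theorem Fin.sbtw_iff_of_finRotate_eq {a b p k : Fin (n + 1)} (h : finRotate _ p = k)
    (ha : a ≠ k) (hb : b ≠ p) (hb' : b ≠ k) : sbtw a b k ↔ sbtw a b p := by
  subst h
  have := a.is_lt; have := b.is_lt
  simp only [ne_eq, Fin.ext_iff, coe_finRotate, Fin.val_last] at ha hb hb'
  simp only [Fin.sbtw_iff, Fin.lt_def, coe_finRotate, Fin.ext_iff, Fin.val_last]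
  split_ifs at ha hb hb' ⊢ <;> omega

theorem finRotate_apply_ne_self (p : Fin (n + 2)) : finRotate (n + 2) p ≠ p :=
  mem_support.1 (support_finRotate (n := n) ▸ Finset.mem_univ p)

end Fin

namespace Equiv.Perm

theorem SameCycle.induction_apply {α : Type*} [Finite α] {g : Perm α} {x y : α}
    {P : α → Prop} (h : g.SameCycle x y) (hx : P x) (hP : ∀ z, P z → P (g z)) : P y := by
  obtain ⟨i, rfl⟩ := h.exists_nat_pow_eq
  clear h
  induction i with
  | zero => exact hx
  | succ i ih => rw [pow_succ', mul_apply]; exact hP _ ih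

variable {n : ℕ}

/-- `g.erase k` is `g` with `k` short-circuited out of its cycle (`g⁻¹ k ↦ g k`), relabelled
by `Fin n` through `k.succAbove`. -/
def erase (g : Perm (Fin (n + 1))) (k : Fin (n + 1)) : Perm (Fin n) :=
  (finSuccAboveEquiv k).symm.permCongr <| (g * swap (g⁻¹ k) k).subtypePerm fun x =>
    have hk : (g * swap (g⁻¹ k) k) k = k := by simp
    not_congr ⟨fun h => (g * swap (g⁻¹ k) k).injective (h.trans hk.symm), fun h => h ▸ hk⟩

theorem succAbove_erase (g : Perm (Fin (n + 1))) (k : Fin (n + 1)) (x : Fin n) :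
    k.succAbove (g.erase k x) =
      if g (k.succAbove x) = k then g k else g (k.succAbove x) := by
  have hval : ∀ s, k.succAbove ((finSuccAboveEquiv k).symm s) = s := fun s => by
    have := congrArg Subtype.val ((finSuccAboveEquiv k).apply_symm_apply s)
    rwa [finSuccAboveEquiv_apply] at this
  rw [erase, permCongr_apply, symm_symm, hval]
  simp only [subtypePerm_apply, finSuccAboveEquiv_apply, coe_mul, Function.comp_apply]
  split_ifs with h
  · rw [eq_inv_iff_eq.2 h, swap_apply_left]
  · rw [swap_apply_of_ne_of_ne (fun h' => h (by simp [h'])) (k.succAbove_ne x)]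

section EraseCycles

variable {g : Perm (Fin (n + 1))} {k : Fin (n + 1)}

theorem sameCycle_erase {x y : Fin n} :
    (g.erase k).SameCycle x y ↔ g.SameCycle (k.succAbove x) (k.succAbove y) := by
  constructor
  · refine fun h => h.induction_apply (P := fun z => g.SameCycle (k.succAbove x) (k.succAbove z))
      (SameCycle.refl _ _) fun z hz => ?_
    rw [succAbove_erase]
    split_ifs with hzk
    · rw [show g k = g (g (k.succAbove z)) by rw [hzk]]
      exact hz.trans ((SameCycle.refl _ _).apply_right.apply_right)
    · exact hz.trans (SameCycle.refl _ _).apply_right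
  · intro h
    -- `P w`: `w`, read back in `Fin n` with `k` read as `g k`, is in the cycle of `x`
    refine h.induction_apply (P := fun w => ∀ y', k.succAbove y' = w ∨ w = k ∧
        k.succAbove y' = g k → (g.erase k).SameCycle x y') ?_ ?_ y (Or.inl rfl)
    · rintro y' (hy' | ⟨hk, -⟩)
      · rw [Fin.succAbove_right_injective hy']
      · exact absurd hk (k.succAbove_ne x)
    intro w hw y' hy'
    rcases eq_or_ne w k with rfl | hwk
    · obtain hy' | ⟨hgw, hy'⟩ := hy'
      · exact hw y' (Or.inr ⟨rfl, hy'⟩)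
      · exact absurd (hy'.trans hgw) (w.succAbove_ne y')
    obtain ⟨z, rfl⟩ := Fin.exists_succAbove_eq hwk
    suffices g.erase k z = y' by
      rw [← this]
      exact (hw z (Or.inl rfl)).trans (SameCycle.refl _ _).apply_right
    apply Fin.succAbove_right_injective (p := k)
    rw [succAbove_erase]
    obtain hy' | ⟨hgz, hy'⟩ := hy'
    · rw [if_neg fun h => k.succAbove_ne y' (hy'.trans h), hy']
    · rw [if_pos hgz, hy']

theorem injective_quotientMap_succAbove :
    Function.Injective (Quotient.map (sa := SameCycle.setoid (g.erase k))
      (sb := SameCycle.setoid g) k.succAbove fun _ _ => sameCycle_erase.1) := by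
  rintro ⟨x⟩ ⟨y⟩ h
  exact Quotient.sound (sameCycle_erase.2 (Quotient.exact h))

theorem cycleCount_erase_of_apply_ne (hk : g k ≠ k) : cycleCount (g.erase k) = cycleCount g := by
  refine Nat.card_eq_of_bijective _ ⟨injective_quotientMap_succAbove, ?_⟩
  rintro ⟨z⟩
  obtain ⟨w, hw, hwz⟩ : ∃ w, w ≠ k ∧ g.SameCycle w z := by
    rcases eq_or_ne z k with rfl | hz
    · exact ⟨g z, hk, (SameCycle.refl g z).apply_left⟩
    · exact ⟨z, hz, SameCycle.refl g z⟩
  obtain ⟨x, rfl⟩ := Fin.exists_succAbove_eq hw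
  exact ⟨⟦x⟧, Quotient.sound hwz⟩

theorem cycleCount_erase_of_apply_eq (hk : g k = k) :
    cycleCount g = cycleCount (g.erase k) + 1 := by
  have hne : ∀ x, (⟦k.succAbove x⟧ : Quotient (SameCycle.setoid g)) ≠ ⟦k⟧ := fun x h =>
    k.succAbove_ne x ((Quotient.exact h).eq_of_right hk)
  have hbij : Function.Bijective (Sum.elim (Quotient.map (sa := SameCycle.setoid (g.erase k))
      (sb := SameCycle.setoid g) k.succAbove fun _ _ => sameCycle_erase.1)
        fun _ : Unit => ⟦k⟧) := by
    refine ⟨?_, ?_⟩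
    · rintro (q | ⟨⟩) (q' | ⟨⟩) h
      · exact congrArg Sum.inl (injective_quotientMap_succAbove h)
      · obtain ⟨x⟩ := q
        exact absurd h (hne x)
      · obtain ⟨y⟩ := q'
        exact absurd h.symm (hne y)
      · rfl
    · rintro ⟨z⟩
      rcases eq_or_ne z k with rfl | hz
      · exact ⟨Sum.inr (), rfl⟩
      · obtain ⟨x, rfl⟩ := Fin.exists_succAbove_eq hz
        exact ⟨Sum.inl ⟦x⟧, rfl⟩
  rw [cycleCount_eq_card_quotient, ← Nat.card_eq_of_bijective _ hbij, Nat.card_sum,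
    Nat.card_unique (α := Unit), cycleCount_eq_card_quotient]

end EraseCycles

@[simp]
theorem erase_one (k : Fin (n + 1)) : (1 : Perm (Fin (n + 1))).erase k = 1 := by
  ext x : 1
  apply Fin.succAbove_right_injective (p := k)
  simp [succAbove_erase, k.succAbove_ne x]

theorem erase_mul {f g : Perm (Fin (n + 1))} {k : Fin (n + 1)} (h : g k = k ∨ f (g k) = k) :
    (f * g).erase k = f.erase k * g.erase k := by
  ext x : 1
  apply Fin.succAbove_right_injective (p := k)
  have hx := k.succAbove_ne x
  simp only [mul_apply, succAbove_erase]
  rcases h with h | h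
  · have hgx : g (k.succAbove x) ≠ k := fun h' => hx (g.injective (h'.trans h.symm))
    simp [hgx, h]
  by_cases hgx : g (k.succAbove x) = k
  · have hfk : f k ≠ k := fun hfk => hx (g.injective (hgx.trans (f.injective (hfk.trans h.symm))))
    simp [hgx, h, hfk]
  · have hfgx : f (g (k.succAbove x)) ≠ k := fun h' =>
      hx (g.injective (f.injective (h'.trans h.symm)))
    simp [hgx, hfgx]

theorem erase_inv (g : Perm (Fin (n + 1))) (k : Fin (n + 1)) : (g.erase k)⁻¹ = g⁻¹.erase k :=
  inv_eq_of_mul_eq_one_right <| by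
    rw [← erase_mul (Or.inr (by simp)), mul_inv_cancel, erase_one]

theorem erase_finRotate (k : Fin (n + 2)) : (finRotate (n + 2)).erase k = finRotate (n + 1) := by
  ext w : 1
  apply Fin.succAbove_right_injective (p := k)
  have := w.is_lt
  rw [succAbove_erase, Fin.ext_iff, apply_ite Fin.val]
  simp only [coe_finRotate, Fin.val_succAbove_eq_ite, Fin.ext_iff, Fin.val_last]
  split_ifs <;> omega

section Noncrossing

variable {α : Type*} [SBtw α]

def HasNoncrossingCycles (g : Perm α) : Prop :=
  ∀ a b c d, sbtw a b c → sbtw c d a → g.SameCycle a c → g.SameCycle b d → g.SameCycle a b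

def MapsToCyclicSucc (g : Perm α) : Prop :=
  ∀ x y, g.SameCycle x y → ¬sbtw x y (g x)

end Noncrossing

theorem hasNoncrossingCycles_iff {g : Perm (Fin n)} :
    HasNoncrossingCycles g ↔ ∀ a b c d : Fin n, a < b → b < c → c < d →
      g.SameCycle a c → g.SameCycle b d → g.SameCycle a b := by
  refine ⟨fun h a b c d hab hbc hcd => h a b c d (Fin.sbtw_iff.2 (.inl ⟨hab, hbc⟩))
    (Fin.sbtw_iff.2 (.inr (.inr ⟨hab.trans hbc, hcd⟩))), fun h a b c d h₁ h₂ hac hbd => ?_⟩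
  -- the consistent cases are the four cyclic rotations of `a < b < c < d`
  rcases Fin.sbtw_iff.1 h₁ with ⟨h1, h2⟩ | ⟨h1, h2⟩ | ⟨h1, h2⟩ <;>
    rcases Fin.sbtw_iff.1 h₂ with ⟨h3, h4⟩ | ⟨h3, h4⟩ | ⟨h3, h4⟩
  · order
  · exact (h d a b c h3 h1 h2 hbd.symm hac).symm.trans hbd.symm
  · exact h a b c d h1 h2 h4 hac hbd
  · exact hac.trans (h b c d a h1 h3 h4 hbd hac.symm).symm
  · order
  · order
  · exact hac.trans ((h c d a b h3 h4 h2 hac.symm hbd.symm).trans hbd.symm)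
  · order
  · order

theorem isLeast_iff_forall_not_sbtw {S : Set (Fin n)} {x z : Fin n} (hz : z ∈ S)
    (hfix : z = x → ∀ y ∈ S, y = x) :
    ((∃ y ∈ S, x < y) → IsLeast {y | y ∈ S ∧ x < y} z) ∧ ((¬∃ y ∈ S, x < y) → IsLeast S z) ↔
      ∀ y ∈ S, ¬sbtw x y z := by
  constructor
  · rintro ⟨h₁, h₂⟩ y hy hs
    rcases Fin.sbtw_iff.1 hs with ⟨hxy, hyz⟩ | ⟨hyz, hzx⟩ | ⟨hzx, hxy⟩
    · exact ((h₁ ⟨y, hy, hxy⟩).2 ⟨hy, hxy⟩).not_gt hyz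
    · by_cases hex : ∃ y ∈ S, x < y
      · exact lt_asymm hzx (h₁ hex).1.2
      · exact ((h₂ hex).2 hy).not_gt hyz
    · exact lt_asymm hzx (h₁ ⟨y, hy, hxy⟩).1.2
  · intro H
    refine ⟨fun ⟨y₀, hy₀, hxy₀⟩ => ?_, fun hex => ⟨hz, fun y hy => not_lt.1 fun hyz => ?_⟩⟩
    · have hxz : x < z := by
        rcases lt_trichotomy x z with h | rfl | h
        · exact h
        · exact absurd (hfix rfl y₀ hy₀) hxy₀.ne'
        · exact absurd (Fin.sbtw_iff.2 (.inr (.inr ⟨h, hxy₀⟩))) (H y₀ hy₀)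
      exact ⟨⟨hz, hxz⟩, fun y ⟨hy, hxy⟩ =>
        not_lt.1 fun hyz => H y hy (Fin.sbtw_iff.2 (.inl ⟨hxy, hyz⟩))⟩
    · have hzx : z < x := by
        refine lt_of_le_of_ne (not_lt.1 fun h => hex ⟨z, hz, h⟩) fun h => ?_
        exact hyz.ne (hfix h y hy ▸ h.symm)
      exact H y hy (Fin.sbtw_iff.2 (.inr (.inl ⟨hyz, hzx⟩)))

theorem isNonCrossing_iff {g : Perm (Fin n)} :
    IsNonCrossing g ↔ HasNoncrossingCycles g ∧ MapsToCyclicSucc g :=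
  and_congr hasNoncrossingCycles_iff.symm <| forall_congr' fun x =>
    (isLeast_iff_forall_not_sbtw (S := {y | g.SameCycle x y}) (SameCycle.refl g x).apply_right
      fun h _ hy => (hy.eq_of_left h).symm)

section EraseNoncrossing

variable {g : Perm (Fin (n + 1))} {k : Fin (n + 1)}

theorem HasNoncrossingCycles.erase (h : HasNoncrossingCycles g) :
    HasNoncrossingCycles (g.erase k) := fun _ _ _ _ h₁ h₂ hac hbd =>
  sameCycle_erase.2 <| h _ _ _ _ (Fin.sbtw_succAbove_iff.2 h₁) (Fin.sbtw_succAbove_iff.2 h₂)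
    (sameCycle_erase.1 hac) (sameCycle_erase.1 hbd)

theorem HasNoncrossingCycles.of_erase_of_ne (h : HasNoncrossingCycles (g.erase k))
    {a b c d : Fin (n + 1)} (ha : a ≠ k) (hb : b ≠ k) (hc : c ≠ k) (hd : d ≠ k)
    (h₁ : sbtw a b c) (h₂ : sbtw c d a) (hac : g.SameCycle a c) (hbd : g.SameCycle b d) :
    g.SameCycle a b := by
  obtain ⟨a, rfl⟩ := Fin.exists_succAbove_eq ha
  obtain ⟨b, rfl⟩ := Fin.exists_succAbove_eq hb
  obtain ⟨c, rfl⟩ := Fin.exists_succAbove_eq hc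
  obtain ⟨d, rfl⟩ := Fin.exists_succAbove_eq hd
  rw [Fin.sbtw_succAbove_iff] at h₁ h₂
  exact sameCycle_erase.1 (h a b c d h₁ h₂ (sameCycle_erase.2 hac) (sameCycle_erase.2 hbd))

theorem MapsToCyclicSucc.of_erase_of_ne (h : MapsToCyclicSucc (g.erase k)) {z y : Fin (n + 1)}
    (hz : z ≠ k) (hy : y ≠ k) (hgz : g z ≠ k) (hzy : g.SameCycle z y) : ¬sbtw z y (g z) := by
  obtain ⟨x, rfl⟩ := Fin.exists_succAbove_eq hz
  obtain ⟨y, rfl⟩ := Fin.exists_succAbove_eq hy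
  rw [show g (k.succAbove x) = k.succAbove (g.erase k x) by rw [succAbove_erase, if_neg hgz],
    Fin.sbtw_succAbove_iff]
  exact h x y (sameCycle_erase.2 hzy)

theorem MapsToCyclicSucc.erase_of_apply_ne (h : MapsToCyclicSucc g) {x y : Fin n}
    (hx : g (k.succAbove x) ≠ k) (hxy : (g.erase k).SameCycle x y) : ¬sbtw x y (g.erase k x) := by
  rw [← Fin.sbtw_succAbove_iff (p := k), succAbove_erase, if_neg hx]
  exact h _ _ (sameCycle_erase.1 hxy)

end EraseNoncrossing

theorem hasNoncrossingCycles_of_forall_left {g : Perm (Fin n)} (k : Fin n)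
    (hk : ∀ b c d, sbtw k b c → sbtw c d k → g.SameCycle k c → g.SameCycle b d → g.SameCycle k b)
    (hne : ∀ a b c d, a ≠ k → b ≠ k → c ≠ k → d ≠ k → sbtw a b c → sbtw c d a →
      g.SameCycle a c → g.SameCycle b d → g.SameCycle a b) :
    HasNoncrossingCycles g := by
  intro a b c d h₁ h₂ hac hbd
  have h₃ : sbtw b c d := Fin.sbtw_rotate h₁ h₂
  have h₄ : sbtw d a b := Fin.sbtw_rotate h₂ h₁
  rcases eq_or_ne a k with rfl | ha
  · exact hk b c d h₁ h₂ hac hbd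
  rcases eq_or_ne b k with rfl | hb
  · exact hac.trans (hk c d a h₃ h₄ hbd hac.symm).symm
  rcases eq_or_ne c k with rfl | hc
  · exact hac.trans ((hk d a b h₂ h₁ hac.symm hbd.symm).trans hbd.symm)
  rcases eq_or_ne d k with rfl | hd
  · exact (hk a b c h₄ h₃ hbd.symm hac).symm.trans hbd.symm
  exact hne a b c d ha hb hc hd h₁ h₂ hac hbd

section FixedPoint

variable {g : Perm (Fin (n + 1))} {k : Fin (n + 1)}

theorem hasNoncrossingCycles_erase_iff_of_apply_eq (hk : g k = k) :
    HasNoncrossingCycles (g.erase k) ↔ HasNoncrossingCycles g := by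
  refine ⟨fun h => hasNoncrossingCycles_of_forall_left k (fun b c d h₁ _ hkc _ => ?_)
    fun _ _ _ _ ha hb hc hd => h.of_erase_of_ne ha hb hc hd, HasNoncrossingCycles.erase⟩
  rw [← hkc.eq_of_left hk] at h₁
  exact absurd h₁ sbtw_irrefl_left_right

theorem mapsToCyclicSucc_erase_iff_of_apply_eq (hk : g k = k) :
    MapsToCyclicSucc (g.erase k) ↔ MapsToCyclicSucc g := by
  have hne : ∀ z, z ≠ k → g z ≠ k := fun z hz h => hz (g.injective (h.trans hk.symm))
  refine ⟨fun h z y hzy hs => ?_, fun h x _ => h.erase_of_apply_ne (hne _ (k.succAbove_ne x))⟩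
  have hz : z ≠ k := by
    rintro rfl
    rw [hk] at hs
    exact sbtw_irrefl_left_right hs
  exact h.of_erase_of_ne hz (fun hy => hz (hy ▸ hzy.eq_of_right (hy ▸ hk))) (hne z hz) hzy hs

end FixedPoint

section Successor

/- Nothing lies strictly between `p` and `k = p + 1` in the circular order, so in any
configuration of points `k` may be traded for `p`, which lies in the same cycle. -/

variable {g : Perm (Fin (n + 2))} {p k : Fin (n + 2)}

theorem hasNoncrossingCycles_erase_iff_of_finRotate (hp : g p = k) (hτ : finRotate _ p = k) :
    HasNoncrossingCycles (g.erase k) ↔ HasNoncrossingCycles g := by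
  have hcyc : g.SameCycle p k := hp ▸ (SameCycle.refl g p).apply_right
  refine ⟨fun h => hasNoncrossingCycles_of_forall_left k (fun b c d h₁ h₂ hkc hbd => ?_)
    fun _ _ _ _ ha hb hc hd => h.of_erase_of_ne ha hb hc hd, HasNoncrossingCycles.erase⟩
  rcases eq_or_ne b p with rfl | hbp
  · exact hcyc.symm
  rcases eq_or_ne c p with rfl | hcp
  · exact absurd h₂ (Fin.not_sbtw_of_finRotate_eq hτ d)
  rcases eq_or_ne d p with rfl | hdp
  · exact (hbd.trans hcyc).symm
  have hb : b ≠ k := fun h => sbtw_irrefl_left (h ▸ h₁)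
  have hc : c ≠ k := fun h => sbtw_irrefl_left_right (h ▸ h₁)
  have hd : d ≠ k := fun h => sbtw_irrefl_right (h ▸ h₂)
  have h₁' : sbtw p b c :=
    ((Fin.sbtw_iff_of_finRotate_eq hτ hb hcp hc).1 h₁.cyclic_left).cyclic_right
  have h₂' : sbtw c d p := (Fin.sbtw_iff_of_finRotate_eq hτ hc hdp hd).1 h₂
  exact hcyc.symm.trans (h.of_erase_of_ne (hτ ▸ (finRotate_apply_ne_self p).symm) hb hc hd
    h₁' h₂' (hcyc.trans hkc) hbd)

theorem MapsToCyclicSucc.of_erase_of_finRotate (h : MapsToCyclicSucc (g.erase k)) (hp : g p = k)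
    (hτ : finRotate _ p = k) : MapsToCyclicSucc g := by
  have hpk : p ≠ k := hτ ▸ (finRotate_apply_ne_self p).symm
  have hcyc : g.SameCycle p k := hp ▸ (SameCycle.refl g p).apply_right
  have hgk : g k ≠ k := fun h => hpk (g.injective (hp.trans h.symm))
  obtain ⟨xp, hxp⟩ := Fin.exists_succAbove_eq hpk
  have hxp' : k.succAbove (g.erase k xp) = g k := by rw [succAbove_erase, hxp, if_pos hp]
  intro z y hzy hs
  rcases eq_or_ne z p with rfl | hzp
  · exact Fin.not_sbtw_of_finRotate_eq hτ y (hp ▸ hs)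
  have hgz : g z ≠ k := fun h => hzp (g.injective (h.trans hp.symm))
  rcases eq_or_ne z k with rfl | hzk
  · have hyz : y ≠ z := fun h => sbtw_irrefl_left (h ▸ hs)
    rcases eq_or_ne y p with rfl | hyp
    · exact Fin.not_sbtw_of_finRotate_eq hτ _ hs.cyclic_left
    obtain ⟨y', rfl⟩ := Fin.exists_succAbove_eq hyz
    have hxy' : (g.erase z).SameCycle xp y' := sameCycle_erase.2 (hxp ▸ hcyc.trans hzy)
    -- if `g z = p`, the cycle of `z` is `{p, z}`, which leaves no room for `y`
    have hgzp : g z ≠ p := fun hgz => hyp <| by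
      have hfix : g.erase z xp = xp :=
        Fin.succAbove_right_injective (hxp'.trans (hgz.trans hxp.symm))
      rw [← hxp, ← hxy'.eq_of_left hfix]
    refine h xp y' hxy' ?_
    rw [← Fin.sbtw_succAbove_iff (p := z), hxp, hxp']
    exact ((Fin.sbtw_iff_of_finRotate_eq hτ (z.succAbove_ne y') hgzp hgk).1
      hs.cyclic_left).cyclic_right
  rcases eq_or_ne y k with rfl | hyk
  · have hgzp : g z ≠ p := fun h => Fin.not_sbtw_of_finRotate_eq hτ z (h ▸ hs).cyclic_right
    exact h.of_erase_of_ne hzk hpk hgz (hzy.trans hcyc.symm)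
      ((Fin.sbtw_iff_of_finRotate_eq hτ hgz hzp hzk).1 hs.cyclic_right).cyclic_left
  exact h.of_erase_of_ne hzk hyk hgz hzy hs

theorem MapsToCyclicSucc.erase_of_finRotate (h : MapsToCyclicSucc g) (hp : g p = k)
    (hτ : finRotate _ p = k) : MapsToCyclicSucc (g.erase k) := by
  have hpk : p ≠ k := hτ ▸ (finRotate_apply_ne_self p).symm
  have hgk : g k ≠ k := fun h => hpk (g.injective (hp.trans h.symm))
  intro x y hxy hs
  rcases eq_or_ne (g (k.succAbove x)) k with hx | hx
  swap
  · exact h.erase_of_apply_ne hx hxy hs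
  have hxp : k.succAbove x = p := g.injective (hx.trans hp.symm)
  have hx' : k.succAbove (g.erase k x) = g k := by rw [succAbove_erase, if_pos hx]
  have hgkp : g k ≠ p := by
    rw [← hx', ← hxp]
    exact Fin.succAbove_right_injective.ne fun h => sbtw_irrefl_left_right (h ▸ hs)
  rw [← Fin.sbtw_succAbove_iff (p := k), hxp, hx'] at hs
  refine h k _ ?_ ((Fin.sbtw_iff_of_finRotate_eq hτ (k.succAbove_ne y) hgkp hgk).2
    hs.cyclic_left).cyclic_right
  exact (hp ▸ (SameCycle.refl g p).apply_right).symm.trans (hxp ▸ sameCycle_erase.1 hxy)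

end Successor

section Existence

variable {g : Perm (Fin (n + 1))}

theorem exists_shorter_arc (hnc : HasNoncrossingCycles g) (hsucc : MapsToCyclicSucc g)
    (hfree : ∀ x, g x ≠ x) {k : Fin (n + 1)} (hk : k < g k) (hrot : g k ≠ finRotate _ k) :
    ∃ j, j < g j ∧ (g j : ℕ) - j < (g k : ℕ) - k := by
  -- `m = k + 1` is not in the cycle of `k`, so its whole cycle lies strictly between `k` and
  -- `g k`; the least point `j` of that cycle starts a shorter arc
  set m := finRotate (n + 1) k with hm
  have hkm : k < m := (lt_finRotate_iff_ne_last k).2 (hk.trans_le (Fin.le_last _)).ne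
  have hmk : m < g k := by
    refine lt_of_le_of_ne ?_ hrot.symm
    rw [Fin.le_def, hm, coe_finRotate_of_ne_last (hk.trans_le (Fin.le_last _)).ne]
    exact hk
  have hkmgk : sbtw k m (g k) := Fin.sbtw_iff.2 (.inl ⟨hkm, hmk⟩)
  have hkm' : ¬g.SameCycle k m := fun h => hsucc k m h hkmgk
  have hinside : ∀ y, g.SameCycle m y → k < y ∧ y < g k := by
    intro y hy
    by_contra hout
    have hyk : y ≠ k := fun h => hkm' (h ▸ hy).symm
    have hygk : y ≠ g k := fun h => hkm' ((SameCycle.refl g k).apply_right.trans (h ▸ hy).symm)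
    refine hkm' (hnc k m (g k) y hkmgk ?_ (SameCycle.refl g k).apply_right hy)
    simp only [Fin.sbtw_iff, Fin.lt_def, ne_eq, Fin.ext_iff] at hout hyk hygk hk ⊢
    omega
  obtain ⟨j, hj, hjmin⟩ := (Finset.univ.filter (g.SameCycle m)).exists_min_image id
    ⟨m, Finset.mem_filter.2 ⟨Finset.mem_univ m, SameCycle.refl g m⟩⟩
  simp only [Finset.mem_filter, Finset.mem_univ, true_and, id] at hj hjmin
  refine ⟨j, lt_of_le_of_ne (hjmin _ hj.apply_right) (hfree j).symm, ?_⟩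
  obtain ⟨h₁, -⟩ := hinside j hj
  obtain ⟨-, h₂⟩ := hinside _ hj.apply_right
  rw [Fin.lt_def] at h₁ h₂ hk
  omega

theorem exists_apply_eq_finRotate (hnc : HasNoncrossingCycles g) (hsucc : MapsToCyclicSucc g)
    (hfree : ∀ x, g x ≠ x) : ∃ k, g k = finRotate _ k := by
  by_contra! hrot
  obtain ⟨k, hk, hmin⟩ := (Finset.univ.filter fun x => x < g x).exists_min_image
    (fun x => (g x : ℕ) - x) ⟨0, by simpa using Fin.pos_of_ne_zero (hfree 0)⟩
  obtain ⟨j, hj, hlt⟩ := exists_shorter_arc hnc hsucc hfree (by simpa using hk) (hrot k)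
  exact (hmin j (by simpa using hj)).not_gt hlt

end Existence

section Step

variable {g : Perm (Fin (n + 2))} {k : Fin (n + 2)}

theorem noncrossing_erase_iff (hk : g⁻¹ k = k ∨ finRotate _ (g⁻¹ k) = k) :
    HasNoncrossingCycles (g.erase k) ∧ MapsToCyclicSucc (g.erase k) ↔
      HasNoncrossingCycles g ∧ MapsToCyclicSucc g := by
  rcases hk with hk | hk
  · rw [inv_eq_iff_eq] at hk
    exact and_congr (hasNoncrossingCycles_erase_iff_of_apply_eq hk.symm)
      (mapsToCyclicSucc_erase_iff_of_apply_eq hk.symm)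
  · have hp : g (g⁻¹ k) = k := by simp
    exact and_congr (hasNoncrossingCycles_erase_iff_of_finRotate hp hk)
      ⟨(·.of_erase_of_finRotate hp hk), (·.erase_of_finRotate hp hk)⟩

theorem cycleCount_add_cycleCount_erase (hk : g⁻¹ k = k ∨ finRotate _ (g⁻¹ k) = k) :
    cycleCount g + cycleCount (finRotate _ * g⁻¹) =
      cycleCount (g.erase k) + cycleCount (finRotate _ * (g.erase k)⁻¹) + 1 := by
  rw [erase_inv, ← erase_finRotate k, ← erase_mul hk]
  rcases hk with hk | hk
  · have hτ : (finRotate (n + 2) * g⁻¹) k ≠ k := by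
      rw [mul_apply, hk]
      exact finRotate_apply_ne_self k
    rw [cycleCount_erase_of_apply_eq (inv_eq_iff_eq.1 hk).symm, cycleCount_erase_of_apply_ne hτ]
    omega
  · have hgk : g k ≠ k := fun h => finRotate_apply_ne_self k <| by
      rwa [inv_eq_iff_eq.2 h.symm] at hk
    rw [cycleCount_erase_of_apply_eq (g := finRotate (n + 2) * g⁻¹) hk,
      cycleCount_erase_of_apply_ne hgk]
    omega

end Step

theorem cycleCount_add_cycleCount_eq_iff :
    ∀ (n : ℕ) (g : Perm (Fin (n + 1))),
      cycleCount g + cycleCount (finRotate _ * g⁻¹) = n + 2 ↔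
        HasNoncrossingCycles g ∧ MapsToCyclicSucc g
  | 0, g => by
    have h₁ : ∀ f : Perm (Fin 1), cycleCount f = 1 := fun f =>
      le_antisymm (by simpa using cycleCount_le_card f) (one_le_cycleCount f)
    have hs : ∀ a b c : Fin 1, ¬sbtw a b c := fun a b c h =>
      sbtw_irrefl_left_right (Subsingleton.elim c a ▸ h)
    simp [h₁, HasNoncrossingCycles, MapsToCyclicSucc, hs]
  | n + 1, g => by
    by_cases hdel : ∃ k, g⁻¹ k = k ∨ finRotate _ (g⁻¹ k) = k
    · obtain ⟨k, hk⟩ := hdel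
      rw [← noncrossing_erase_iff hk, ← cycleCount_add_cycleCount_eq_iff n (g.erase k),
        cycleCount_add_cycleCount_erase hk]
      omega
    simp only [not_exists, not_or] at hdel
    have hg : ∀ x, g x ≠ x := fun x h => (hdel x).1 (by rw [inv_eq_iff_eq, h])
    refine iff_of_false (fun h => ?_) fun ⟨hnc, hsucc⟩ => ?_
    · have := two_mul_cycleCount_le hg
      have := two_mul_cycleCount_le (g := finRotate _ * g⁻¹) fun x => (hdel x).2
      simp only [Nat.card_eq_fintype_card, Fintype.card_fin] at *
      omega
    · obtain ⟨k, hk⟩ := exists_apply_eq_finRotate hnc hsucc hg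
      exact (hdel (g k)).2 (by simpa using hk.symm)

end Equiv.Perm

/-- Biane's theorem: `g` lies on the Cayley geodesic between the identity and the
full cycle `τ = finRotate N` iff `g` is a non-crossing permutation. -/
theorem stmt2 (N : ℕ) (hN : 1 ≤ N) (g : Equiv.Perm (Fin N)) :
    (cycleCount g + cycleCount (finRotate N * g⁻¹) = N + 1 ↔ IsNonCrossing g) ∧
    (cayley 1 g + cayley g (finRotate N) = N - 1 ↔ IsNonCrossing g) := by
  obtain ⟨n, rfl⟩ : ∃ n, N = n + 1 := ⟨N - 1, by omega⟩
  have key := (cycleCount_add_cycleCount_eq_iff n g).trans isNonCrossing_iff.symm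
  refine ⟨key, ?_⟩
  rw [← key, cayley_comm 1 g, cayley_comm g (finRotate _), cayley, cayley, inv_one, mul_one]
  have := one_le_cycleCount g
  have := one_le_cycleCount (finRotate (n + 1) * g⁻¹)
  have := cycleCount_le_card g
  have := cycleCount_le_card (finRotate (n + 1) * g⁻¹)
  simp only [Nat.card_eq_fintype_card, Fintype.card_fin] at *
  omega
end

section
/- For any permutations g and g₀ of a finite set of cardinality N, one has N − #(g) ≥ #(g₀) − #⟨g,g₀⟩, where #⟨g,g₀⟩ denotes the number of orbits of the subgroup generated by g and g₀. Equivalently, d(g,e) ≥ #(g₀) − #⟨g,g₀⟩. -/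
/-- The number of orbits of the subgroup generated by two permutations `g, h`. -/
noncomputable def jointOrbitCount {α : Type*} (g h : Equiv.Perm α) : ℕ :=
  Nat.card (MulAction.orbitRel.Quotient (Subgroup.closure ({g, h} : Set (Equiv.Perm α))) α)

open Module

namespace Setoid

variable {α : Type*} (K : Type*) [Field K]

def constOnClasses (r : Setoid α) : Submodule K (α → K) :=
  LinearMap.range (LinearMap.funLeft K K (Quotient.mk r))

variable {K}

theorem mem_constOnClasses {r : Setoid α} {f : α → K} :
    f ∈ constOnClasses K r ↔ r ≤ ker f :=
  ⟨by rintro ⟨φ, rfl⟩ x y h; exact congrArg φ (Quotient.sound h),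
   fun h => ⟨Quotient.lift f fun _ _ hxy => h hxy, rfl⟩⟩

theorem constOnClasses_sup (r s : Setoid α) :
    constOnClasses K (r ⊔ s) = constOnClasses K r ⊓ constOnClasses K s := by
  ext f
  simp only [Submodule.mem_inf, mem_constOnClasses, sup_le_iff]

theorem finrank_constOnClasses [Finite α] (r : Setoid α) :
    finrank K (constOnClasses K r) = Nat.card (Quotient r) := by
  have := Fintype.ofFinite (Quotient r)
  rw [constOnClasses, LinearMap.finrank_range_of_inj
    (LinearMap.funLeft_injective_of_surjective _ _ _ Quotient.mk_surjective),
    finrank_fintype_fun_eq_card, Nat.card_eq_fintype_card]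

theorem card_quotient_add_card_quotient_le [Finite α] (r s : Setoid α) :
    Nat.card (Quotient r) + Nat.card (Quotient s) ≤ Nat.card α + Nat.card (Quotient (r ⊔ s)) := by
  have := Fintype.ofFinite α
  have hsup := Submodule.finrank_le (constOnClasses ℚ r ⊔ constOnClasses ℚ s)
  rw [finrank_fintype_fun_eq_card, ← Nat.card_eq_fintype_card] at hsup
  rw [← finrank_constOnClasses (K := ℚ), ← finrank_constOnClasses (K := ℚ),
    ← finrank_constOnClasses (K := ℚ), constOnClasses_sup,
    ← Submodule.finrank_sup_add_finrank_inf_eq]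
  omega

end Setoid

namespace Equiv.Perm

variable {α : Type*}

theorem cycleCount_eq (g : Perm α) : cycleCount g = Nat.card (Quotient (SameCycle.setoid g)) := rfl

theorem orbitRel_closure_pair (g h : Perm α) :
    MulAction.orbitRel (Subgroup.closure ({g, h} : Set (Perm α))) α =
      SameCycle.setoid g ⊔ SameCycle.setoid h := by
  refine le_antisymm ?_ (sup_le ?_ ?_)
  · suffices ∀ w ∈ Subgroup.closure ({g, h} : Set (Perm α)), ∀ y,
        (SameCycle.setoid g ⊔ SameCycle.setoid h) (w y) y by
      rintro _ y ⟨⟨w, hw⟩, rfl⟩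
      exact this w hw y
    intro w hw
    induction hw using Subgroup.closure_induction with
    | mem k hk =>
      have hk : SameCycle.setoid k ≤ SameCycle.setoid g ⊔ SameCycle.setoid h := by
        rcases hk with rfl | rfl
        exacts [le_sup_left, le_sup_right]
      exact fun y => Setoid.symm' _ (hk ⟨1, rfl⟩)
    | one => exact Setoid.refl' _
    | mul k l _ _ ihk ihl => exact fun y => Setoid.trans' _ (ihk (l y)) (ihl y)
    | inv k _ ihk => exact fun y => by simpa using Setoid.symm' _ (ihk (k⁻¹ y))
  · rintro x _ ⟨i, rfl⟩
    exact Setoid.symm' _ ⟨⟨g ^ i, zpow_mem (Subgroup.subset_closure (by simp)) i⟩, rfl⟩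
  · rintro x _ ⟨i, rfl⟩
    exact Setoid.symm' _ ⟨⟨h ^ i, zpow_mem (Subgroup.subset_closure (by simp)) i⟩, rfl⟩

theorem jointOrbitCount_eq (g h : Perm α) :
    jointOrbitCount g h = Nat.card (Quotient (SameCycle.setoid g ⊔ SameCycle.setoid h)) := by
  rw [← orbitRel_closure_pair]
  rfl

theorem cycleCount_le_card [Finite α] (g : Perm α) : cycleCount g ≤ Nat.card α :=
  Nat.card_le_card_of_surjective _ Quotient.mk_surjective

end Equiv.Perm

/-- `N - #(g) ≥ #(g₀) - #⟨g,g₀⟩`, i.e. `d(g,e) ≥ #(g₀) - #⟨g,g₀⟩`. -/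
theorem stmt5 {α : Type*} [Finite α] (g g₀ : Equiv.Perm α) :
    cycleCount g₀ ≤ (Nat.card α - cycleCount g) + jointOrbitCount g g₀ := by
  have := Setoid.card_quotient_add_card_quotient_le
    (Equiv.Perm.SameCycle.setoid g) (Equiv.Perm.SameCycle.setoid g₀)
  rw [← Equiv.Perm.cycleCount_eq, ← Equiv.Perm.cycleCount_eq,
    ← Equiv.Perm.jointOrbitCount_eq] at this
  have := Equiv.Perm.cycleCount_le_card g
  omega
end

section
/- Fix integers n ≥ 1 and even m ≥ 2, set N = m·n, and let g_A, g_B, X be the permutations of ℤ/Nℤ defined in the context. Then the following Cayley distances hold: d(g_A,e) = d(g_B,e) = n·(m−1); d(g_A,g_B) = 2·(n−1); d(X,e) = n·(m−2); and d(X,g_A) = d(X,g_B) = n. -/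
/-!
Write `c = m / 2`. The number of cycles of a permutation is the number of values of any
function `ρ` that is constant along cycles and satisfies `x ~ ρ x` (same cycle). The block
rotations `g_B` and `X` therefore have `n` and `2n` cycles, and `g_A` is conjugate to `g_B`.
Comparing the two block structures, `X g_B⁻¹` swaps `q m ↔ q m + c` and fixes everything
else, and since `X` commutes with the translation `t`, `X g_A⁻¹` is conjugate to it: both have
`N - n` cycles. Finally `g_A g_B⁻¹` moves the residue class `0 mod m` by `+m`, the class
`c mod m` by `-m`, and fixes the other `N - 2n` points, so it has `N - 2n + 2` cycles.
-/

open Equiv Equiv.Perm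

theorem cycleCount_conj {α : Type*} (t g : Perm α) : cycleCount (t * g * t⁻¹) = cycleCount g :=
  Nat.card_congr (Quotient.congr t.symm fun _ _ => sameCycle_conj)

theorem cycleCount_eq_ncard_range {α : Type*} (g : Perm α) (ρ : α → α)
    (hinv : ∀ x, ρ (g x) = ρ x) (hrep : ∀ x, g.SameCycle x (ρ x)) :
    cycleCount g = (Set.range ρ).ncard := by
  have hzpow : ∀ (i : ℤ) x, ρ ((g ^ i) x) = ρ x := by
    intro i
    induction i using Int.induction_on with
    | zero => simp
    | succ i ih => intro x; rw [zpow_add_one, mul_apply, ih, hinv]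
    | pred i ih => intro x; rw [zpow_sub_one, mul_apply, ih, ← hinv (g⁻¹ x)]; simp
  have hker : ∀ x y, g.SameCycle x y ↔ Setoid.ker (Set.rangeFactorization ρ) x y :=
    fun x y => ⟨fun ⟨i, hi⟩ => Subtype.ext (hi ▸ hzpow i x).symm,
      fun h => by
        have hxy : ρ x = ρ y := congrArg Subtype.val h
        exact (hrep x).trans (hxy ▸ (hrep y).symm)⟩
  rw [← Nat.card_coe_set_eq]
  exact Nat.card_congr ((Quotient.congrRight hker).trans
    (Setoid.quotientKerEquivOfSurjective _ Set.rangeFactorization_surjective))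

theorem Equiv.Perm.sameCycle_of_apply_eq_add_one {α : Type*} {K : ℕ} [NeZero K] {f : Perm α}
    {φ : ZMod K → α} (h : ∀ q, f (φ q) = φ (q + 1)) (q q' : ZMod K) :
    f.SameCycle (φ q) (φ q') := by
  have hpow : ∀ j : ℕ, (f ^ j) (φ q) = φ (q + j) := by
    intro j
    induction j with
    | zero => simp
    | succ j ih => rw [pow_succ', mul_apply, ih, h, Nat.cast_succ, add_assoc]
  exact ⟨(q' - q).val, by rw [zpow_natCast, hpow, ZMod.natCast_zmod_val, add_sub_cancel]⟩

theorem Equiv.Perm.mul_inv_apply_of_apply_eq {α : Type*} {f g : Perm α} {x y z : α}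
    (hg : g y = x) (hf : f y = z) : (f * g⁻¹) x = z := by
  rw [mul_apply, inv_eq_iff_eq.mpr hg.symm, hf]

namespace ZMod

variable {N : ℕ} [NeZero N]

theorem val_mul_add_natCast_mod {d : ℕ} (hd : d ∣ N) (q : ZMod N) {s : ℕ} (hs : s < d) :
    (q * d + s).val % d = s := by
  rw [← natCast_zmod_val q, ← Nat.cast_mul, ← Nat.cast_add, val_natCast,
    Nat.mod_mod_of_dvd _ hd, mul_comm, Nat.mul_add_mod, Nat.mod_eq_of_lt hs]

theorem val_mul_natCast_mod {d : ℕ} (hd : d ∣ N) (q : ZMod N) : (q * d).val % d = 0 := by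
  simpa using val_mul_add_natCast_mod hd q (Nat.pos_of_dvd_of_pos hd (NeZero.pos N))

theorem forall_mul_add_natCast {d : ℕ} (hd : 0 < d) {P : ZMod N → Prop}
    (h : ∀ (q : ZMod N) (s : ℕ), s < d → P (q * d + s)) (x : ZMod N) : P x := by
  have hx : x = ((x.val / d : ℕ) : ZMod N) * d + ((x.val % d : ℕ) : ZMod N) := by
    rw [← Nat.cast_mul, ← Nat.cast_add, Nat.div_add_mod', natCast_zmod_val]
  exact hx ▸ h _ _ (Nat.mod_lt _ hd)

theorem ncard_setOf_val_mod_eq {d k : ℕ} (hN : d * k = N) {r : ℕ} (hr : r < d) :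
    {x : ZMod N | x.val % d = r}.ncard = k := by
  set f : Fin k → ZMod N := fun q => ((q * d + r : ℕ) : ZMod N)
  have hlt : ∀ q : Fin k, (q : ℕ) * d + r < N := fun q => by
    nlinarith [q.isLt]
  have hval : ∀ q, (f q).val = q * d + r := fun q => val_cast_of_lt (hlt q)
  have hrange : {x : ZMod N | x.val % d = r} = Set.range f := by
    ext x
    refine ⟨fun hx => ⟨⟨x.val / d, Nat.div_lt_of_lt_mul (hN ▸ x.val_lt)⟩, ?_⟩, ?_⟩
    · simp only [f]
      rw [← hx, Nat.div_add_mod', natCast_zmod_val]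
    · rintro ⟨q, rfl⟩
      rw [Set.mem_ofPred_eq, hval, mul_comm, Nat.mul_add_mod, Nat.mod_eq_of_lt hr]
  have hinj : Function.Injective f := fun q q' h => by
    have := congrArg val h
    rw [hval, hval] at this
    exact Fin.ext (Nat.eq_of_mul_eq_mul_right (by omega) (Nat.add_right_cancel this))
  rw [hrange, Set.ncard_range_of_injective hinj, Nat.card_eq_fintype_card, Fintype.card_fin]

end ZMod

def IsBlockRotation {N : ℕ} (d : ℕ) (g : Perm (ZMod N)) : Prop :=
  ∀ q r : ℕ, r < d → g ((q * d + r : ℕ) : ZMod N) = ((q * d + (r + 1) % d : ℕ) : ZMod N)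

namespace IsBlockRotation

variable {N d : ℕ} [NeZero N] {g : Perm (ZMod N)}

theorem apply_mul_add (hg : IsBlockRotation d g) (q : ZMod N) {r : ℕ} (hr : r < d) :
    g (q * d + r) = q * d + ((r + 1) % d : ℕ) := by
  simpa only [Nat.cast_add, Nat.cast_mul, ZMod.natCast_zmod_val] using hg q.val r hr

theorem apply_mul_add_of_lt (hg : IsBlockRotation d g) (q : ZMod N) {r : ℕ} (hr : r + 1 < d) :
    g (q * d + r) = q * d + r + 1 := by
  rw [hg.apply_mul_add q (by omega), Nat.mod_eq_of_lt hr, Nat.cast_succ, add_assoc]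

theorem apply_mul_add_of_eq (hg : IsBlockRotation d g) (q : ZMod N) {r : ℕ} (hr : r + 1 = d) :
    g (q * d + r) = q * d := by
  rw [hg.apply_mul_add q (by omega), hr, Nat.mod_self, Nat.cast_zero, add_zero]

theorem commute_addLeft (hg : IsBlockRotation d g) (hd : d ∣ N) :
    Commute g (Equiv.addLeft (d : ZMod N)) := by
  have hd0 : 0 < d := Nat.pos_of_dvd_of_pos hd (NeZero.pos N)
  refine Equiv.ext (ZMod.forall_mul_add_natCast hd0 fun q s hs => ?_)
  change g (d + (q * d + s)) = d + g (q * d + s)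
  rw [show (d : ZMod N) + (q * d + s) = (q + 1) * d + s by ring, hg.apply_mul_add _ hs,
    hg.apply_mul_add _ hs]
  ring

theorem cycleCount_eq (hg : IsBlockRotation d g) {k : ℕ} (hN : d * k = N) :
    cycleCount g = k := by
  have hd : d ∣ N := ⟨k, hN.symm⟩
  have hd0 : 0 < d := Nat.pos_of_dvd_of_pos hd (NeZero.pos N)
  have : NeZero d := ⟨hd0.ne'⟩
  have hres := ZMod.val_mul_add_natCast_mod (N := N) hd
  rw [cycleCount_eq_ncard_range g (fun x => x - ((x.val % d : ℕ) : ZMod N))]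
  · convert ZMod.ncard_setOf_val_mod_eq hN hd0 using 2
    ext x
    refine ⟨?_, fun hx => ⟨x, by simp [show x.val % d = 0 from hx]⟩⟩
    rintro ⟨y, rfl⟩
    revert y
    refine ZMod.forall_mul_add_natCast hd0 fun q s hs => ?_
    simpa [hres q hs] using ZMod.val_mul_natCast_mod hd q
  · refine ZMod.forall_mul_add_natCast hd0 fun q s hs => ?_
    simp only [hg.apply_mul_add q hs, hres q hs, hres q (Nat.mod_lt _ hd0), add_sub_cancel_right]
  · refine ZMod.forall_mul_add_natCast hd0 fun q s hs => ?_
    simp only [hres q hs, add_sub_cancel_right]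
    have horbit : ∀ r : ZMod d, g (q * d + r.val) = q * d + (r + 1).val := fun r => by
      rw [hg.apply_mul_add q (ZMod.val_lt r), ZMod.val_add, ZMod.val_one_eq_one_mod,
        Nat.add_mod_mod]
    have := sameCycle_of_apply_eq_add_one horbit (s : ZMod d) 0
    rwa [ZMod.val_cast_of_lt hs, ZMod.val_zero, Nat.cast_zero, add_zero] at this

end IsBlockRotation

section ResidueClasses

variable {N : ℕ} [NeZero N] {m c k : ℕ}

theorem cycleCount_eq_of_swaps (hc0 : 0 < c) (hcm : c < m) (hN : m * k = N)
    {T : Perm (ZMod N)} (h0 : ∀ q : ZMod N, T (q * m) = q * m + c)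
    (hc : ∀ q : ZMod N, T (q * m + c) = q * m)
    (hfix : ∀ (q : ZMod N) (s : ℕ), s < m → s ≠ 0 → s ≠ c →
      T (q * m + s) = q * m + s) :
    cycleCount T = N - k := by
  have hm : m ∣ N := ⟨k, hN.symm⟩
  have hm0 : 0 < m := by omega
  have hres := ZMod.val_mul_add_natCast_mod (N := N) hm
  have hres0 := ZMod.val_mul_natCast_mod (N := N) hm
  set ρ : ZMod N → ZMod N := fun x => if x.val % m = c then x - c else x
  have hrange : Set.range ρ = {x | x.val % m = c}ᶜ := by
    ext y
    refine ⟨?_, fun hy => ⟨y, if_neg hy⟩⟩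
    rintro ⟨x, rfl⟩
    revert x
    refine ZMod.forall_mul_add_natCast hm0 fun q s hs => ?_
    by_cases hsc : s = c
    · subst hsc
      simp [ρ, hres q hs, hres0, hc0.ne]
    · simp [ρ, hres q hs, hsc]
  rw [cycleCount_eq_ncard_range T ρ, hrange, Set.ncard_compl, Nat.card_zmod,
    ZMod.ncard_setOf_val_mod_eq hN hcm]
  · refine ZMod.forall_mul_add_natCast hm0 fun q s hs => ?_
    by_cases hs0 : s = 0
    · subst hs0
      simp [ρ, h0, hres q hcm, hres0, hc0.ne]
    by_cases hsc : s = c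
    · subst hsc
      simp [ρ, hc, hres q hs, hres0, hc0.ne]
    · simp [hfix q s hs hs0 hsc]
  · refine ZMod.forall_mul_add_natCast hm0 fun q s hs => ?_
    by_cases hsc : s = c
    · rw [hsc]
      simp only [ρ, hres q hcm, ↓reduceIte, add_sub_cancel_right]
      exact ⟨1, by rw [zpow_one, hc]⟩
    · simpa [ρ, hres q hs, hsc] using SameCycle.refl T _

theorem cycleCount_eq_of_shifts (hc0 : 0 < c) (hcm : c < m) (hN : m * k = N)
    {F : Perm (ZMod N)} (h0 : ∀ q : ZMod N, F (q * m) = (q + 1) * m)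
    (hc : ∀ q : ZMod N, F (q * m + c) = (q - 1) * m + c)
    (hfix : ∀ (q : ZMod N) (s : ℕ), s < m → s ≠ 0 → s ≠ c →
      F (q * m + s) = q * m + s) :
    cycleCount F = N - 2 * k + 2 := by
  have hm : m ∣ N := ⟨k, hN.symm⟩
  have hm0 : 0 < m := by omega
  have hres := ZMod.val_mul_add_natCast_mod (N := N) hm
  have hres0 := ZMod.val_mul_natCast_mod (N := N) hm
  have hcval : (c : ZMod N).val % m = c := by simpa using hres 0 hcm
  set ρ : ZMod N → ZMod N := fun x => if x.val % m = 0 then 0 else if x.val % m = c then c else x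
  have hrange : Set.range ρ = {x | x.val % m = 0 ∨ x.val % m = c}ᶜ ∪ {0, (c : ZMod N)} := by
    ext y
    refine ⟨?_, ?_⟩
    · rintro ⟨x, rfl⟩
      revert x
      refine ZMod.forall_mul_add_natCast hm0 fun q s hs => ?_
      by_cases hs0 : s = 0
      · simp [ρ, hs0, hres0]
      by_cases hsc : s = c
      · simp [ρ, hsc, hres q hcm, hc0.ne']
      · simp [ρ, hres q hs, hs0, hsc]
    · rintro (hy | rfl | rfl)
      · exact ⟨y, by simp_all [ρ]⟩
      · exact ⟨0, by simp [ρ]⟩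
      · exact ⟨c, by simp only [ρ, hcval, hc0.ne', ↓reduceIte]⟩
  have hdisj : Disjoint {x : ZMod N | x.val % m = 0 ∨ x.val % m = c}ᶜ {0, (c : ZMod N)} :=
    Set.disjoint_right.2 (by rintro _ (rfl | rfl) <;> simp [-ZMod.val_natCast, hcval])
  have hc0' : (0 : ZMod N) ≠ c := fun h => hc0.ne (by simpa [← h] using hcval)
  rw [cycleCount_eq_ncard_range F ρ, hrange, Set.ncard_union_eq hdisj, Set.ncard_pair hc0',
    Set.ncard_compl, Set.ofPred_or, Set.ncard_union_eq, Nat.card_zmod,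
    ZMod.ncard_setOf_val_mod_eq hN hm0, ZMod.ncard_setOf_val_mod_eq hN hcm, two_mul]
  · exact Set.disjoint_left.2 fun x h0 hc => hc0.ne (h0.symm.trans hc)
  · refine ZMod.forall_mul_add_natCast hm0 fun q s hs => ?_
    by_cases hs0 : s = 0
    · simp [ρ, hs0, h0, hres0]
    by_cases hsc : s = c
    · simp [ρ, hsc, hc, hres _ hcm, hc0.ne']
    · simp [hfix q s hs hs0 hsc]
  · refine ZMod.forall_mul_add_natCast hm0 fun q s hs => ?_
    by_cases hs0 : s = 0
    · simpa [ρ, hs0, hres0] using sameCycle_of_apply_eq_add_one (φ := (· * (m : ZMod N))) h0 q 0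
    by_cases hsc : s = c
    · have hφ : ∀ q : ZMod N, F (-q * m + c) = -(q + 1) * m + c := fun q => by
        rw [hc]
        ring
      simpa [ρ, hsc, hres _ hcm, hc0.ne'] using sameCycle_of_apply_eq_add_one hφ (-q) 0
    · simpa [ρ, hres q hs, hs0, hsc] using SameCycle.refl F _

end ResidueClasses

section HalfBlocks

variable {N c k : ℕ} [NeZero N] {gB X : Perm (ZMod N)}

theorem cycleCount_halfBlockRotation_mul_inv (hc : 0 < c) (hN : 2 * c * k = N)
    (hB : IsBlockRotation (2 * c) gB) (hX : IsBlockRotation c X) :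
    cycleCount (X * gB⁻¹) = N - k := by
  -- writing the half-block length as `c + 1` keeps truncated subtraction out of the casts
  obtain ⟨c, rfl⟩ := Nat.exists_eq_add_one_of_ne_zero hc.ne'
  refine cycleCount_eq_of_swaps hc (by omega) hN (fun q => ?_) (fun q => ?_)
    (fun q s hs hs0 hsc => ?_)
  · refine mul_inv_apply_of_apply_eq (y := q * (2 * (c + 1) : ℕ) + (2 * c + 1 : ℕ))
      (hB.apply_mul_add_of_eq q (by omega)) ?_
    rw [show q * (2 * (c + 1) : ℕ) + ((2 * c + 1 : ℕ) : ZMod N) =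
      (2 * q + 1) * (c + 1 : ℕ) + c by push_cast; ring, hX.apply_mul_add_of_eq _ rfl]
    push_cast; ring
  · refine mul_inv_apply_of_apply_eq (y := q * (2 * (c + 1) : ℕ) + c)
      (by rw [hB.apply_mul_add_of_lt q (by omega)]; push_cast; ring) ?_
    rw [show q * (2 * (c + 1) : ℕ) + (c : ZMod N) = 2 * q * (c + 1 : ℕ) + c by
      push_cast; ring, hX.apply_mul_add_of_eq _ rfl]
    push_cast; ring
  · obtain ⟨s, rfl⟩ := Nat.exists_eq_add_one_of_ne_zero hs0
    refine mul_inv_apply_of_apply_eq (y := q * (2 * (c + 1) : ℕ) + s)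
      (by rw [hB.apply_mul_add_of_lt q hs]; push_cast; ring) ?_
    rcases Nat.lt_or_ge s c with hsc' | hsc'
    · rw [show q * (2 * (c + 1) : ℕ) + (s : ZMod N) = 2 * q * (c + 1 : ℕ) + s by
        push_cast; ring, hX.apply_mul_add_of_lt _ (by omega)]
      push_cast; ring
    · obtain ⟨t, rfl⟩ := Nat.exists_eq_add_of_le (show c + 1 ≤ s by omega)
      rw [show q * (2 * (c + 1) : ℕ) + ((c + 1 + t : ℕ) : ZMod N) =
        (2 * q + 1) * (c + 1 : ℕ) + t by push_cast; ring, hX.apply_mul_add_of_lt _ (by omega)]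
      push_cast; ring

theorem cycleCount_conj_addLeft_mul_inv {gA : Perm (ZMod N)} (hc : 0 < c)
    (hN : 2 * c * k = N) (hB : IsBlockRotation (2 * c) gB)
    (hA : gA = Equiv.addLeft (c : ZMod N) * gB * (Equiv.addLeft (c : ZMod N))⁻¹) :
    cycleCount (gA * gB⁻¹) = N - 2 * k + 2 := by
  have hA' : ∀ y, gA y = c + gB (-c + y) := fun y => by simp [hA]
  obtain ⟨c, rfl⟩ := Nat.exists_eq_add_one_of_ne_zero hc.ne'
  refine cycleCount_eq_of_shifts hc (by omega) hN (fun q => ?_) (fun q => ?_)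
    (fun q s hs hs0 hsc => ?_)
  · refine mul_inv_apply_of_apply_eq (y := q * (2 * (c + 1) : ℕ) + (2 * c + 1 : ℕ))
      (hB.apply_mul_add_of_eq q (by omega)) ?_
    rw [hA', show -((c + 1 : ℕ) : ZMod N) + (q * (2 * (c + 1) : ℕ) + (2 * c + 1 : ℕ)) =
      q * (2 * (c + 1) : ℕ) + c by push_cast; ring, hB.apply_mul_add_of_lt _ (by omega)]
    push_cast; ring
  · refine mul_inv_apply_of_apply_eq (y := q * (2 * (c + 1) : ℕ) + c)
      (by rw [hB.apply_mul_add_of_lt q (by omega)]; push_cast; ring) ?_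
    rw [hA', show -((c + 1 : ℕ) : ZMod N) + (q * (2 * (c + 1) : ℕ) + c) =
      (q - 1) * (2 * (c + 1) : ℕ) + (2 * c + 1 : ℕ) by push_cast; ring,
      hB.apply_mul_add_of_eq _ (by omega)]
    ring
  · obtain ⟨s, rfl⟩ := Nat.exists_eq_add_one_of_ne_zero hs0
    refine mul_inv_apply_of_apply_eq (y := q * (2 * (c + 1) : ℕ) + s)
      (by rw [hB.apply_mul_add_of_lt q hs]; push_cast; ring) ?_
    rcases Nat.lt_or_ge s c with hsc' | hsc'
    · rw [hA', show -((c + 1 : ℕ) : ZMod N) + (q * (2 * (c + 1) : ℕ) + s) =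
        (q - 1) * (2 * (c + 1) : ℕ) + (c + 1 + s : ℕ) by push_cast; ring,
        hB.apply_mul_add_of_lt _ (by omega)]
      push_cast; ring
    · obtain ⟨t, rfl⟩ := Nat.exists_eq_add_of_le (show c + 1 ≤ s by omega)
      rw [hA', show -((c + 1 : ℕ) : ZMod N) + (q * (2 * (c + 1) : ℕ) + (c + 1 + t : ℕ)) =
        q * (2 * (c + 1) : ℕ) + t by push_cast; ring, hB.apply_mul_add_of_lt _ (by omega)]
      push_cast; ring

end HalfBlocks

/-- The Cayley distances: `d(g_A,e) = d(g_B,e) = n(m-1)`, `d(g_A,g_B) = 2(n-1)`,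
`d(X,e) = n(m-2)` and `d(X,g_A) = d(X,g_B) = n`. -/
theorem stmt13 (n m : ℕ) (hn : 1 ≤ n) (hm : 2 ≤ m) (hme : Even m)
    (gB gA X : Equiv.Perm (ZMod (m * n)))
(hgB : ∀ q r : ℕ, r < m →
      gB ((q * m + r : ℕ) : ZMod (m * n)) = ((q * m + (r + 1) % m : ℕ) : ZMod (m * n)))
    (hgA : gA = Equiv.addLeft ((m / 2 : ℕ) : ZMod (m * n)) * gB *
      (Equiv.addLeft ((m / 2 : ℕ) : ZMod (m * n)))⁻¹)
(hX : ∀ q r : ℕ, r < m / 2 →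
      X ((q * (m / 2) + r : ℕ) : ZMod (m * n)) =
        ((q * (m / 2) + (r + 1) % (m / 2) : ℕ) : ZMod (m * n)))
    :
    cayley gA 1 = n * (m - 1) ∧ cayley gB 1 = n * (m - 1) ∧
    cayley gA gB = 2 * (n - 1) ∧ cayley X 1 = n * (m - 2) ∧
    cayley X gA = n ∧ cayley X gB = n := by
  obtain ⟨c, rfl⟩ := even_iff_two_dvd.mp hme
  have hc : 0 < c := by omega
  have : NeZero (2 * c * n) := ⟨by positivity⟩
  rw [show 2 * c / 2 = c by omega] at hgA hX
  have hXt : Commute X (Equiv.addLeft (c : ZMod (2 * c * n))) :=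
    IsBlockRotation.commute_addLeft hX ⟨2 * n, by ring⟩
  have hXA : X * gA⁻¹ = Equiv.addLeft (c : ZMod (2 * c * n)) * (X * gB⁻¹) *
      (Equiv.addLeft (c : ZMod (2 * c * n)))⁻¹ := by
    rw [hgA, mul_inv_rev, mul_inv_rev, inv_inv, ← mul_assoc, ← mul_assoc, hXt.eq, mul_assoc _ X]
  have cB : cycleCount gB = n := IsBlockRotation.cycleCount_eq hgB rfl
  have cA : cycleCount gA = n := by rw [hgA, cycleCount_conj, cB]
  have cX : cycleCount X = 2 * n := IsBlockRotation.cycleCount_eq hX (by ring)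
  have cXB : cycleCount (X * gB⁻¹) = 2 * c * n - n :=
    cycleCount_halfBlockRotation_mul_inv hc rfl hgB hX
  have cXA : cycleCount (X * gA⁻¹) = 2 * c * n - n := by rw [hXA, cycleCount_conj, cXB]
  have cAB : cycleCount (gA * gB⁻¹) = 2 * c * n - 2 * n + 2 :=
    cycleCount_conj_addLeft_mul_inv hc rfl hgB hgA
  simp only [cayley, inv_one, mul_one, Nat.card_zmod, cA, cB, cX, cXB, cXA, cAB]
  have hcn : 2 * n ≤ 2 * c * n := Nat.mul_le_mul_right n hm
  have h1 : n * (2 * c - 1) = 2 * c * n - n := by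
    zify [show 1 ≤ 2 * c by omega, show n ≤ 2 * c * n by omega]; ring
  have h2 : n * (2 * c - 2) = 2 * c * n - 2 * n := by zify [hm, hcn]; ring
  refine ⟨h1.symm, h1.symm, ?_, h2.symm, ?_, ?_⟩ <;> omega
end

section
/- Let n ≥ 1 and consider partitions of the set {0,1,…,2n−1}. Let t_B be the perfect-matching partition {{0,1},{2,3},…,{2n−2,2n−1}} and let t_A be the shifted matching {{1,2},{3,4},…,{2n−1,0}}. Then for every partition q of {0,1,…,2n−1}: #(q ∨ t_A) + #(q ∨ t_B) ≤ #(q) + 1; moreover, if q contains at least one singleton block, then #(q ∨ t_A) + #(q ∨ t_B) ≤ #(q). -/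
/-!
With rank `ρ(p) = |X| - #(p)` the partition lattice is semimodular, which gives
`#(p') + #(p ⊔ r) ≤ #(p) + #(p' ⊔ r)` whenever `p ≤ p'`. Taking `p = q`, `p' = q ⊔ t_A`,
`r = t_B` and using that the edges of `t_A` and `t_B` together form a Hamiltonian cycle, so that
`t_A ⊔ t_B = ⊤`, gives the first bound. If `{i}` is a block of `q`, take for `r` the matching
`t_B` with the edge at `i` removed: `t_A ⊔ r` is still `⊤` (a Hamiltonian path), and adding that
edge back merges the singleton `{i}` of `q ⊔ r` into another block, so
`#(q ⊔ t_B) = #(q ⊔ r) - 1`.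
-/

namespace Setoid

variable {α : Type*}

def pair (a b : α) : Setoid α :=
  Relation.EqvGen.setoid fun x y => x = a ∧ y = b

theorem pair_rel (a b : α) : pair a b a b :=
  Relation.EqvGen.rel _ _ ⟨rfl, rfl⟩

theorem pair_le {s : Setoid α} {a b : α} (h : s a b) : pair a b ≤ s :=
  eqvGen_le fun _ _ ⟨hx, hy⟩ => hx ▸ hy ▸ h

theorem sup_pair_rel_of_rel_of_rel {p : Setoid α} {a b x y : α} (hx : p x b) (hy : p a y) :
    (p ⊔ pair a b) x y := by
  set s := p ⊔ pair a b
  have hp : p ≤ s := le_sup_left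
  have hab : s a b := le_sup_right (a := p) (pair_rel a b)
  exact s.trans' (hp hx) (s.trans' (s.symm' hab) (hp hy))

open Classical in
theorem sup_pair_eq_ker (p : Setoid α) (a b : α) :
    p ⊔ pair a b = ker fun x => if p x b then (⟦a⟧ : Quotient p) else ⟦x⟧ := by
  apply le_antisymm
  · refine sup_le (fun x y hxy => ?_) (pair_le ?_)
    · by_cases hx : p x b
      · simp [hx, p.trans' (p.symm' hxy) hx]
      · have hy : ¬ p y b := fun hy => hx (p.trans' hxy hy)
        simp [hx, hy, Quotient.sound hxy]
    · simp
  · intro x y hxy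
    by_cases hx : p x b <;> by_cases hy : p y b <;>
      simp only [ker_def, hx, hy, if_true, if_false, Quotient.eq] at hxy
    · exact le_sup_left (b := pair a b) (p.trans' hx (p.symm' hy))
    · exact sup_pair_rel_of_rel_of_rel hx hxy
    · exact (p ⊔ pair a b).symm' (sup_pair_rel_of_rel_of_rel hy (p.symm' hxy))
    · exact le_sup_left (b := pair a b) hxy

theorem card_quotient_sup_pair_add_one [Finite α] {p : Setoid α} {a b : α} (h : ¬ p a b) :
    Nat.card (Quotient (p ⊔ pair a b)) + 1 = Nat.card (Quotient p) := by
  classical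
  have hrange :
      Set.range (fun x => if p x b then (⟦a⟧ : Quotient p) else ⟦x⟧) = {⟦b⟧}ᶜ := by
    ext z
    induction z using Quotient.inductionOn with | h y => ?_
    constructor
    · rintro ⟨x, hx⟩
      by_cases hxb : p x b <;> simp only [hxb, if_true, if_false] at hx <;> rw [← hx]
      · simpa [Quotient.eq] using h
      · simpa [Quotient.eq] using hxb
    · intro hy
      have hyb : ¬ p y b := by simpa [Quotient.eq] using hy
      exact ⟨y, by simp [hyb]⟩
  rw [sup_pair_eq_ker, Nat.card_congr (quotientKerEquivRange _), hrange, Nat.card_coe_set_eq,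
    ← Set.ncard_add_ncard_compl {(⟦b⟧ : Quotient p)}, Set.ncard_singleton, add_comm]

theorem card_quotient_add_sup_pair_le [Finite α] {p p' : Setoid α} (h : p ≤ p') (a b : α) :
    Nat.card (Quotient p') + Nat.card (Quotient (p ⊔ pair a b)) ≤
      Nat.card (Quotient p) + Nat.card (Quotient (p' ⊔ pair a b)) := by
  by_cases hp : p a b
  · rw [sup_eq_left.2 (pair_le hp), sup_eq_left.2 (pair_le (h hp)), add_comm]
  have hcard := card_quotient_sup_pair_add_one hp
  by_cases hp' : p' a b
  · rw [sup_eq_left.2 (pair_le hp')]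
    omega
  · have hcard' := card_quotient_sup_pair_add_one hp'
    omega

theorem finset_sup_pair_eq_self [Fintype α] (r : Setoid α) [DecidableRel r] :
    ({e | r e.1 e.2} : Finset (α × α)).sup (fun e => pair e.1 e.2) = r :=
  le_antisymm (Finset.sup_le fun _ he => pair_le (Finset.mem_filter.1 he).2)
    fun x y hxy => Finset.le_sup (f := fun e => pair e.1 e.2)
      (Finset.mem_filter.2 ⟨Finset.mem_univ (x, y), hxy⟩) (pair_rel x y)

/-- Semimodularity of the partition lattice, whose rank function is `p ↦ |α| - #(p)`. -/
theorem card_quotient_add_sup_le [Finite α] {p p' : Setoid α} (h : p ≤ p') (r : Setoid α) :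
    Nat.card (Quotient p') + Nat.card (Quotient (p ⊔ r)) ≤
      Nat.card (Quotient p) + Nat.card (Quotient (p' ⊔ r)) := by
  classical
  have := Fintype.ofFinite α
  rw [← finset_sup_pair_eq_self r]
  induction ({e | r e.1 e.2} : Finset (α × α)) using Finset.induction_on generalizing p p' with
  | empty => simp only [Finset.sup_empty, sup_bot_eq, add_comm, le_refl]
  | insert e S _ ih =>
    have hpair := card_quotient_add_sup_pair_le h e.1 e.2
    have hS := ih (sup_le_sup_right h (pair e.1 e.2))
    simp only [Finset.sup_insert, ← sup_assoc]
    omega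

theorem inf_ker_sup_pair {r : Setoid α} {a b : α} (hab : r a b) (hba : b ≠ a) :
    r ⊓ ker (· = a) ⊔ pair a b = r := by
  set s := r ⊓ ker (· = a) ⊔ pair a b
  refine le_antisymm (sup_le inf_le_left (pair_le hab)) fun x y hxy => ?_
  have away : ∀ {x y}, x ≠ a → y ≠ a → r x y → s x y := fun hx hy h =>
    le_sup_left (b := pair a b) (inf_iff_and.2 ⟨h, by simp [hx, hy]⟩)
  have from_a : ∀ {y}, r a y → s a y := fun {y} h => by
    by_cases hy : y = a
    · rw [hy]
    · exact s.trans' (le_sup_right (a := r ⊓ ker (· = a)) (pair_rel a b))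
        (away hba hy (r.trans' (r.symm' hab) h))
  by_cases hx : x = a
  · exact hx ▸ from_a (hx ▸ hxy)
  by_cases hy : y = a
  · exact s.symm' (hy ▸ from_a (hy ▸ r.symm' hxy))
  exact away hx hy hxy

theorem card_quotient_top_le_one [Finite α] : Nat.card (Quotient (⊤ : Setoid α)) ≤ 1 :=
  Finite.card_le_one_iff_subsingleton.2
    ⟨fun x y => Quotient.inductionOn₂ x y fun _ _ => Quotient.sound trivial⟩

open Fin.NatCast in
theorem eq_top_of_rel_add_one {N : ℕ} [NeZero N] {s : Setoid (Fin N)} (j : Fin N)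
    (h : ∀ x, x ≠ j → s x (x + 1)) : s = ⊤ := by
  have hpath : ∀ k : ℕ, k < N → s (j + 1) (j + 1 + (k : Fin N)) := by
    intro k hk
    induction k with
    | zero => simp
    | succ k ih =>
      have hne : j + 1 + (k : Fin N) ≠ j := by
        intro he
        rw [add_assoc, add_eq_left, add_comm, ← Nat.cast_succ, Fin.natCast_eq_zero] at he
        exact absurd (Nat.le_of_dvd (by omega) he) (by omega)
      simpa [add_assoc] using s.trans' (ih (by omega)) (h _ hne)
  have hrel : ∀ x, s (j + 1) x := fun x => by
    simpa using hpath (x - (j + 1)).val (x - (j + 1)).isLt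
  exact eq_top_iff.2 fun x y => s.trans' (s.symm' (hrel x)) (hrel y)

end Setoid

/-- The partition `t_B`. -/
def matching (n : ℕ) : Setoid (Fin (2 * n)) :=
  Setoid.ker fun x => x.val / 2

/-- The partition `t_A`. -/
def shiftedMatching (n : ℕ) : Setoid (Fin (2 * n)) :=
  Setoid.ker fun x => (x.val + 1) % (2 * n) / 2

section Matching

variable {n : ℕ}

theorem matching_rel_iff {x y : Fin (2 * n)} : matching n x y ↔ x.val / 2 = y.val / 2 :=
  Iff.rfl

theorem shiftedMatching_rel_iff {x y : Fin (2 * n)} :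
    shiftedMatching n x y ↔ (x.val + 1) % (2 * n) / 2 = (y.val + 1) % (2 * n) / 2 :=
  Iff.rfl

theorem matching_rel_add_one [NeZero n] {x : Fin (2 * n)} (hx : Even x.val) :
    matching n x (x + 1) := by
  obtain ⟨k, hk⟩ := hx
  have hlt : x.val + 1 < 2 * n := by omega
  rw [matching_rel_iff, Fin.val_add, Fin.val_one', Nat.add_mod_mod, Nat.mod_eq_of_lt hlt]
  omega

theorem shiftedMatching_rel_iff_matching [NeZero n] {x y : Fin (2 * n)} :
    shiftedMatching n x y ↔ matching n (x + 1) (y + 1) := by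
  simp only [shiftedMatching_rel_iff, matching_rel_iff, Fin.val_add, Fin.val_one',
    Nat.add_mod_mod]

theorem shiftedMatching_rel_add_one [NeZero n] {x : Fin (2 * n)} (hx : Odd x.val) :
    shiftedMatching n x (x + 1) := by
  refine shiftedMatching_rel_iff_matching.2 (matching_rel_add_one ?_)
  rw [Fin.val_add, Fin.val_one', Nat.add_mod_mod, Nat.even_iff,
    Nat.mod_mod_of_dvd _ (dvd_mul_right 2 n), ← Nat.even_iff]
  exact hx.add_one

theorem exists_ne_matching_rel (i : Fin (2 * n)) : ∃ b, b ≠ i ∧ matching n i b := by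
  have hi := i.isLt
  rcases Nat.even_or_odd' i.val with ⟨k, hk | hk⟩
  · exact ⟨⟨i.val + 1, by omega⟩, fun h => by simp [Fin.ext_iff] at h,
      show i.val / 2 = (i.val + 1) / 2 by omega⟩
  · exact ⟨⟨i.val - 1, by omega⟩, fun h => by simp [Fin.ext_iff] at h; omega,
      show i.val / 2 = (i.val - 1) / 2 by omega⟩

/-- `t_A ∪ t_B` is a Hamiltonian cycle; dropping the `t_B`-edge at `i` leaves a Hamiltonian
path. -/
theorem shiftedMatching_sup_matching_inf_ker_eq_top (i : Fin (2 * n)) :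
    shiftedMatching n ⊔ (matching n ⊓ Setoid.ker (· = i)) = ⊤ := by
  have : NeZero n := NeZero.of_pos (by have := i.pos; omega)
  have hi := i.isLt
  refine Setoid.eq_top_of_rel_add_one ⟨2 * (i.val / 2), by omega⟩ fun x hx => ?_
  rcases Nat.even_or_odd x.val with hxe | hxo
  · refine le_sup_right (a := shiftedMatching n)
      (Setoid.inf_iff_and.2 ⟨matching_rel_add_one hxe, ?_⟩)
    have hlt : x.val + 1 < 2 * n := by obtain ⟨k, hk⟩ := hxe; omega
    simp only [ne_eq, Fin.ext_iff] at hx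
    simp only [Setoid.ker_def, Fin.ext_iff, Fin.val_add, Fin.val_one', Nat.add_mod_mod,
      Nat.mod_eq_of_lt hlt, eq_iff_iff]
    obtain ⟨k, hk⟩ := hxe
    omega
  · exact le_sup_left (b := matching n ⊓ Setoid.ker (· = i)) (shiftedMatching_rel_add_one hxo)

theorem shiftedMatching_sup_matching : shiftedMatching n ⊔ matching n = ⊤ := by
  refine eq_top_iff.2 fun x y _ => ?_
  have hle := sup_le_sup_left (inf_le_left (a := matching n) (b := Setoid.ker (· = x)))
    (shiftedMatching n)
  rw [shiftedMatching_sup_matching_inf_ker_eq_top] at hle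
  exact hle trivial

end Matching

theorem stmt17_general (n : ℕ) (tA tB : Setoid (Fin (2 * n)))
    (htB : ∀ i j : Fin (2 * n), tB.r i j ↔ i.val / 2 = j.val / 2)
    (htA : ∀ i j : Fin (2 * n), tA.r i j ↔
      (i.val + 1) % (2 * n) / 2 = (j.val + 1) % (2 * n) / 2)
    (q : Setoid (Fin (2 * n))) :
    Nat.card (Quotient (q ⊔ tA)) + Nat.card (Quotient (q ⊔ tB)) ≤
      Nat.card (Quotient q) + 1 ∧
    ((∃ i : Fin (2 * n), ∀ j : Fin (2 * n), q.r i j → j = i) →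
      Nat.card (Quotient (q ⊔ tA)) + Nat.card (Quotient (q ⊔ tB)) ≤
        Nat.card (Quotient q)) := by
  obtain rfl : tA = shiftedMatching n := Setoid.ext htA
  obtain rfl : tB = matching n := Setoid.ext htB
  have htop := Setoid.card_quotient_top_le_one (α := Fin (2 * n))
  refine ⟨?_, fun ⟨i, hi⟩ => ?_⟩
  · have key := Setoid.card_quotient_add_sup_le (le_sup_left : q ≤ q ⊔ shiftedMatching n)
      (matching n)
    rw [sup_assoc, shiftedMatching_sup_matching, sup_top_eq] at key
    omega
  · obtain ⟨b, hbi, hib⟩ := exists_ne_matching_rel i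
    have key := Setoid.card_quotient_add_sup_le (le_sup_left : q ≤ q ⊔ shiftedMatching n)
      (matching n ⊓ Setoid.ker (· = i))
    rw [sup_assoc, shiftedMatching_sup_matching_inf_ker_eq_top, sup_top_eq] at key
    have hq : q ≤ Setoid.ker (· = i) := fun x y hxy => by
      rw [Setoid.ker_def, eq_iff_iff]
      exact ⟨fun hx => hx ▸ hi y (hx ▸ hxy), fun hy => hy ▸ hi x (hy ▸ q.symm' hxy)⟩
    have hsep : ¬ (q ⊔ (matching n ⊓ Setoid.ker (· = i))) i b := fun h =>
      hbi (by simpa using sup_le hq inf_le_right h)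
    have hcard := Setoid.card_quotient_sup_pair_add_one hsep
    rw [sup_assoc, Setoid.inf_ker_sup_pair hib hbi] at hcard
    omega

/-- For the matching partitions `t_B = {{0,1},{2,3},...}` and
`t_A = {{1,2},{3,4},...,{2n-1,0}}` of `{0,...,2n-1}` and any partition `q`:
`#(q ∨ t_A) + #(q ∨ t_B) ≤ #(q) + 1`, and `≤ #(q)` if `q` has a singleton block. -/
theorem stmt17 (n : ℕ) (hn : 1 ≤ n) (tA tB : Setoid (Fin (2 * n)))
    (htB : ∀ i j : Fin (2 * n), tB.r i j ↔ i.val / 2 = j.val / 2)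
    (htA : ∀ i j : Fin (2 * n), tA.r i j ↔
      (i.val + 1) % (2 * n) / 2 = (j.val + 1) % (2 * n) / 2)
    (q : Setoid (Fin (2 * n))) :
    Nat.card (Quotient (q ⊔ tA)) + Nat.card (Quotient (q ⊔ tB)) ≤
      Nat.card (Quotient q) + 1 ∧
    ((∃ i : Fin (2 * n), ∀ j : Fin (2 * n), q.r i j → j = i) →
      Nat.card (Quotient (q ⊔ tA)) + Nat.card (Quotient (q ⊔ tB)) ≤
        Nat.card (Quotient q)) :=
  stmt17_general n tA tB htB htA q
end
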